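/- Let μ be a probability measure on [0,1] with no point masses (i.e., μ({x}) = 0 for every x ∈ [0,1]) and let (v_k)_{k≥1} be a (finite or infinite) sequence of points in [0,1]. Then there exists a sequence (x_k)_{k≥1} in [0,1] such that for every N ≥ 2 (with N at most the length of the sequence in the finite case), the empirical measures satisfy D*_N(μ; (1/N)Σ_{i=1}^N δ_{x_i}) = D*_N(λ; (1/N)Σ_{i=1}^N δ_{v_i}), where λ is Lebesgue measure on [0,1]. -/

import Mathlib

open MeasureTheory Set
open scoped ENNReal

/-- The empirical measure `ν_N = (1/N) ∑_{i=1}^N δ_{x_i}` of the first `N` terms of a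
sequence in `[0,1] ⊆ ℝ`. -/
noncomputable def emp1 (N : ℕ) (x : ℕ → ℝ) : Measure ℝ :=
  (N : ℝ≥0∞)⁻¹ • ∑ i ∈ Finset.range N, Measure.dirac (x i)

/-- The one-dimensional star-discrepancy
`D*(μ;ν) = sup_{0 ≤ b ≤ 1} |μ([0,b)) − ν([0,b))|`. -/
noncomputable def starDisc (μ ν : Measure ℝ) : ℝ :=
  ⨆ b : Icc (0 : ℝ) 1, |(μ (Ico 0 ↑b)).toReal - (ν (Ico 0 ↑b)).toReal|

/-!
Since `μ` lives on `[0,1]` and has no atoms, `F b = μ [0, b)` is the cumulative distribution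
function of `μ`, and it is continuous, so it maps `[0,1]` onto `[0,1]`. Put `x_k` at the largest
preimage of `v_k` under `F`. Then `x_k < b ↔ v_k < F b`, so the local discrepancy of `(x_k)`
against `μ` at `b` is the local discrepancy of `(v_k)` against `λ` at `F b`, and the two suprema
agree because `F` is onto.
-/

open ProbabilityTheory

theorem continuous_cdf_of_measure_singleton (μ : Measure ℝ) [IsProbabilityMeasure μ]
    (hμ : ∀ a, μ {a} = 0) : Continuous (cdf μ) := by
  refine continuous_iff_continuousAt.2 fun a => ?_
  rw [(cdf μ).mono.continuousAt_iff_leftLim_eq_rightLim, (cdf μ).rightLim_eq]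
  have h := (cdf μ).measure_singleton a
  rw [measure_cdf, hμ, eq_comm, ENNReal.ofReal_eq_zero, sub_nonpos] at h
  exact le_antisymm ((cdf μ).mono.leftLim_le le_rfl) h

theorem measureReal_Ico_eq_cdf (μ : Measure ℝ) [IsProbabilityMeasure μ] {a b : ℝ}
    (ha : μ (Iio a) = 0) (hb : μ {b} = 0) : μ.real (Ico a b) = cdf μ b := by
  have hIco : Ico a b = Iio b \ Iio a := by ext; simp
  rw [cdf_eq_real, measureReal_def, measureReal_def, hIco, measure_sdiff_null ha,
    measure_congr (Iio_ae_eq_Iic' hb)]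

theorem exists_lt_iff_lt_of_continuous_monotone {F : ℝ → ℝ} (hF : Continuous F)
    (hFm : Monotone F) {u : ℝ} (hu : u ∈ Icc (F 0) (F 1)) :
    ∃ c ∈ Icc (0 : ℝ) 1, ∀ b ≤ 1, c < b ↔ u < F b := by
  set S := Icc (0 : ℝ) 1 ∩ F ⁻¹' {u}
  have hSne : S.Nonempty := intermediate_value_Icc zero_le_one hF.continuousOn hu
  have hScpt : IsCompact S := isCompact_Icc.inter_right (isClosed_singleton.preimage hF)
  obtain ⟨hc01, hFc : F (sSup S) = u⟩ := hScpt.sSup_mem hSne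
  refine ⟨sSup S, hc01, fun b hb1 => ⟨fun hcb => ?_, fun hub => ?_⟩⟩
  · rw [← hFc]
    refine (hFm hcb.le).lt_of_ne' fun hFb => hcb.not_ge ?_
    exact le_csSup hScpt.bddAbove ⟨⟨hc01.1.trans hcb.le, hb1⟩, hFb.trans hFc⟩
  · by_contra! hbc
    exact (hFm hbc).not_gt (hFc ▸ hub)

theorem emp1_apply_eq_of_mem_iff {N : ℕ} {x v : ℕ → ℝ} {s t : Set ℝ}
    (hs : MeasurableSet s) (ht : MeasurableSet t) (h : ∀ i < N, x i ∈ s ↔ v i ∈ t) :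
    emp1 N x s = emp1 N v t := by
  classical
  simp only [emp1, Measure.smul_apply, Measure.coe_finsetSum, Finset.sum_apply,
    Measure.dirac_apply' _ hs, Measure.dirac_apply' _ ht]
  refine congrArg _ (Finset.sum_congr rfl fun i hi => ?_)
  simp only [Set.indicator, Pi.one_apply]
  exact if_congr (h i (Finset.mem_range.1 hi)) rfl rfl

theorem measureReal_restrict_Icc_Ico {c : ℝ} (hc : c ∈ Icc (0 : ℝ) 1) :
    (volume.restrict (Icc (0 : ℝ) 1)).real (Ico 0 c) = c := by
  rw [measureReal_restrict_apply measurableSet_Ico,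
    inter_eq_self_of_subset_left (Ico_subset_Icc_self.trans (Icc_subset_Icc_right hc.2)),
    Real.volume_real_Ico, sub_zero, max_eq_left hc.1]

theorem starDisc_eq_of_surjOn {μ ν μ' ν' : Measure ℝ} {F : ℝ → ℝ}
    (hmaps : MapsTo F (Icc 0 1) (Icc 0 1)) (hsurj : SurjOn F (Icc 0 1) (Icc 0 1))
    (hμ : ∀ b ∈ Icc (0 : ℝ) 1, μ.real (Ico 0 b) = μ'.real (Ico 0 (F b)))
    (hν : ∀ b ∈ Icc (0 : ℝ) 1, ν (Ico 0 b) = ν' (Ico 0 (F b))) :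
    starDisc μ ν = starDisc μ' ν' := by
  refine Eq.trans ?_ ((hmaps.restrict_surjective_iff.2 hsurj).iSup_comp _)
  refine iSup_congr fun b => ?_
  simp only [MapsTo.val_restrict_apply, ← measureReal_def, hμ b b.2, hν b b.2]


/-- Let `μ` be a probability measure on `[0,1]` with no point masses and `(v_k)` a
sequence of points of `[0,1]`. Then there is a sequence `(x_k)` in `[0,1]` such that for
every `N ≥ 2` the star-discrepancy of `(x_k)` with respect to `μ` equals the Lebesgue
star-discrepancy of `(v_k)`. -/
theorem stmt11 (μ : Measure ℝ) [IsProbabilityMeasure μ]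
    (hμ : μ ((Icc (0 : ℝ) 1)ᶜ) = 0)
    (hatom : ∀ a ∈ Icc (0 : ℝ) 1, μ {a} = 0)
    (v : ℕ → ℝ) (hv : ∀ k, v k ∈ Icc (0 : ℝ) 1) :
    ∃ x : ℕ → ℝ, (∀ k, x k ∈ Icc (0 : ℝ) 1) ∧
      ∀ N : ℕ, 2 ≤ N →
        starDisc μ (emp1 N x) =
          starDisc (volume.restrict (Icc (0 : ℝ) 1)) (emp1 N v) := by
  have hatom' : ∀ a, μ {a} = 0 := fun a =>
    if ha : a ∈ Icc (0 : ℝ) 1 then hatom a ha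
    else measure_mono_null (singleton_subset_iff.2 ha) hμ
  have hIio : μ (Iio 0) = 0 :=
    measure_mono_null (fun t (ht : t < 0) (h : t ∈ Icc 0 1) => ht.not_ge h.1) hμ
  have hF : ∀ b, μ.real (Ico 0 b) = cdf μ b := fun b => measureReal_Ico_eq_cdf μ hIio (hatom' b)
  have hF0 : cdf μ 0 = 0 := by rw [← hF]; simp
  have hF1 : cdf μ 1 = 1 := by
    have hIoi : μ (Iic 1)ᶜ = 0 :=
      measure_mono_null (fun t (ht : t ∉ Iic 1) (h : t ∈ Icc 0 1) => ht h.2) hμ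
    rw [cdf_eq_real, measureReal_def, (prob_compl_eq_zero_iff measurableSet_Iic).1 hIoi,
      ENNReal.toReal_one]
  have hcont := continuous_cdf_of_measure_singleton μ hatom'
  have hmaps : MapsTo (cdf μ) (Icc 0 1) (Icc 0 1) := fun b _ => ⟨cdf_nonneg μ b, cdf_le_one μ b⟩
  have hsurj : SurjOn (cdf μ) (Icc 0 1) (Icc 0 1) := by
    have h := intermediate_value_Icc zero_le_one hcont.continuousOn
    rwa [hF0, hF1] at h
  choose g hg01 hg using fun u : Icc (0 : ℝ) 1 =>
    exists_lt_iff_lt_of_continuous_monotone hcont (monotone_cdf μ) (by rw [hF0, hF1]; exact u.2)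
  refine ⟨fun k => g ⟨v k, hv k⟩, fun k => hg01 _, fun N _ => starDisc_eq_of_surjOn hmaps hsurj
    (fun b hb => by rw [hF, measureReal_restrict_Icc_Ico (hmaps hb)])
    (fun b hb => emp1_apply_eq_of_mem_iff measurableSet_Ico measurableSet_Ico fun i _ => ?_)⟩
  simp only [mem_Ico, (hg01 _).1, (hv i).1, true_and]
  exact hg _ b hb.2
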